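/- arXiv:1706.06824 — 7 statements merged into one kernel-verified Lean document; each statement's English description precedes it below -/
import Mathlib

section
/- For every v ∈ ℝ one has v·H*(v) ≤ j(2v) − j(v), where j(r) = ∫₀^r H*(p) dp. -/
open Set

/-- The Legendre conjugate of `H = h + indicator of [0,∞)`:
`H*(p) = sup { p·u − h(u) : u ∈ [0,∞) }`. -/
noncomputable def Hstar (h : ℝ → ℝ) (p : ℝ) : ℝ :=
  sSup ((fun u => p * u - h u) '' Set.Ici (0 : ℝ))

/-- The potential of `H*`: `j(r) = ∫₀ʳ H*(p) dp`. -/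
noncomputable def jpot (h : ℝ → ℝ) (r : ℝ) : ℝ :=
  ∫ p in (0 : ℝ)..r, Hstar h p

/-! `H*` is monotone, being a supremum of the functions `p ↦ p u - h u` with `u ≥ 0`, so
`j(2v) - j(v) = ∫_v^{2v} H*` dominates `v H*(v)`: for `v ≥ 0` because `H* ≥ H*(v)` on `[v, 2v]`,
for `v < 0` because `H* ≤ H*(v)` on `[2v, v]` and the orientation flips the sign. -/

-- The bound is the maximum of `p u - α₁ u²` over all real `u`, attained at `u = p / (2 α₁)`.
lemma bddAbove_Hstar_set {h : ℝ → ℝ} {α₁ α₂ : ℝ} (hα₁ : 0 < α₁)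
    (hlb : ∀ u : ℝ, α₁ * u ^ 2 + α₂ ≤ h u) (p : ℝ) :
    BddAbove ((fun u => p * u - h u) '' Ici (0 : ℝ)) := by
  refine ⟨p ^ 2 / (4 * α₁) - α₂, ?_⟩
  rintro _ ⟨u, -, rfl⟩
  have hquad : p * u - α₁ * u ^ 2 ≤ p ^ 2 / (4 * α₁) := by
    rw [le_div_iff₀ (by positivity)]
    nlinarith [sq_nonneg (p - 2 * α₁ * u)]
  linarith [hlb u]

lemma monotone_Hstar {h : ℝ → ℝ}
    (hbdd : ∀ p : ℝ, BddAbove ((fun u => p * u - h u) '' Ici (0 : ℝ))) :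
    Monotone (Hstar h) := by
  intro p q hpq
  refine csSup_le (Nonempty.image _ nonempty_Ici) ?_
  rintro _ ⟨u, hu, rfl⟩
  calc p * u - h u ≤ q * u - h u := by gcongr
    _ ≤ Hstar h q := le_csSup (hbdd q) ⟨u, hu, rfl⟩

lemma Monotone.sub_mul_le_intervalIntegral {f : ℝ → ℝ} (hf : Monotone f) (a b : ℝ) :
    (b - a) * f a ≤ ∫ x in a..b, f x := by
  rcases le_total a b with hab | hba
  · calc (b - a) * f a = ∫ _ in a..b, f a := by simp
      _ ≤ ∫ x in a..b, f x :=
        intervalIntegral.integral_mono_on hab intervalIntegrable_const hf.intervalIntegrable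
          fun x hx => hf hx.1
  · have hle : ∫ x in b..a, f x ≤ ∫ _ in b..a, f a :=
      intervalIntegral.integral_mono_on hba hf.intervalIntegrable intervalIntegrable_const
        fun x hx => hf hx.2
    rw [intervalIntegral.integral_const, smul_eq_mul] at hle
    rw [intervalIntegral.integral_symm]
    linarith

lemma jpot_sub_jpot (h : ℝ → ℝ) (hmono : Monotone (Hstar h)) (a b : ℝ) :
    jpot h b - jpot h a = ∫ p in a..b, Hstar h p :=
  intervalIntegral.integral_interval_sub_left hmono.intervalIntegrable hmono.intervalIntegrable

theorem v_hstar_le_j_two_v_sub_j_v_general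
    (h : ℝ → ℝ)
    (α₁ α₂ : ℝ) (hα₁ : 0 < α₁)
    (hlb : ∀ u : ℝ, α₁ * u ^ 2 + α₂ ≤ h u) (v : ℝ) :
    v * Hstar h v ≤ jpot h (2 * v) - jpot h v := by
  have hmono : Monotone (Hstar h) := monotone_Hstar (bddAbove_Hstar_set hα₁ hlb)
  rw [jpot_sub_jpot h hmono]
  calc v * Hstar h v = (2 * v - v) * Hstar h v := by ring
    _ ≤ ∫ p in v..(2 * v), Hstar h p := hmono.sub_mul_le_intervalIntegral v (2 * v)

theorem v_hstar_le_j_two_v_sub_j_v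
    (h : ℝ → ℝ) (hconv : ConvexOn ℝ Set.univ h) (hcont : Continuous h)
    (α₁ α₂ : ℝ) (hα₁ : 0 < α₁) (hα₂ : 0 ≤ α₂)
    (hlb : ∀ u : ℝ, α₁ * u ^ 2 + α₂ ≤ h u) (v : ℝ) :
    v * Hstar h v ≤ jpot h (2 * v) - jpot h v :=
  v_hstar_le_j_two_v_sub_j_v_general h α₁ α₂ hα₁ hlb v
end

section
/- If there is a constant C₂ such that j(2v) ≤ C₂·j(v) for all v ∈ ℝ, then H*(v)·v ≤ (C₂ − 1)·j(v) for every v ∈ ℝ. -/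
open Set

lemma hstar_bddAbove (h : ℝ → ℝ) (α₁ α₂ : ℝ) (hα₁ : 0 < α₁)
    (hlb : ∀ u : ℝ, α₁ * u ^ 2 + α₂ ≤ h u) (p : ℝ) :
    BddAbove ((fun u => p * u - h u) '' Set.Ici (0 : ℝ)) := by
  refine ⟨p ^ 2 / (4 * α₁) - α₂, ?_⟩
  rintro x ⟨u, _, rfl⟩
  have h1 := hlb u
  have h4 : (0:ℝ) < 4 * α₁ := by linarith
  have : p * u - α₁ * u ^ 2 ≤ p ^ 2 / (4 * α₁) := by
    rw [le_div_iff₀ h4]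
    nlinarith [sq_nonneg (p - 2 * α₁ * u)]
  simp only
  linarith

lemma hstar_mono (h : ℝ → ℝ) (α₁ α₂ : ℝ) (hα₁ : 0 < α₁)
    (hlb : ∀ u : ℝ, α₁ * u ^ 2 + α₂ ≤ h u) :
    Monotone (Hstar h) := by
  intro p q hpq
  apply csSup_le (Set.Nonempty.image _ Set.nonempty_Ici)
  rintro x ⟨u, hu, rfl⟩
  have hu0 : (0:ℝ) ≤ u := hu
  calc p * u - h u ≤ q * u - h u := by nlinarith
    _ ≤ Hstar h q := le_csSup (hstar_bddAbove h α₁ α₂ hα₁ hlb q) ⟨u, hu, rfl⟩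

theorem hstar_v_mul_v_le
    (h : ℝ → ℝ) (hconv : ConvexOn ℝ Set.univ h) (hcont : Continuous h)
    (α₁ α₂ : ℝ) (hα₁ : 0 < α₁) (hα₂ : 0 ≤ α₂)
    (hlb : ∀ u : ℝ, α₁ * u ^ 2 + α₂ ≤ h u)
    (C₂ : ℝ) (hC₂ : ∀ v : ℝ, jpot h (2 * v) ≤ C₂ * jpot h v) :
    ∀ v : ℝ, Hstar h v * v ≤ (C₂ - 1) * jpot h v := by
  have hmono := hstar_mono h α₁ α₂ hα₁ hlb
  have hint : ∀ a b : ℝ, IntervalIntegrable (Hstar h) MeasureTheory.volume a b :=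
    fun a b => (hmono.monotoneOn _).intervalIntegrable
  intro v
  have hadj : jpot h v + ∫ p in v..(2*v), Hstar h p = jpot h (2*v) :=
    intervalIntegral.integral_add_adjacent_intervals (hint 0 v) (hint v (2*v))
  have key : Hstar h v * v ≤ ∫ p in v..(2*v), Hstar h p := by
    rcases le_or_gt 0 v with hv | hv
    · have hle : v ≤ 2 * v := by linarith
      have hmon : ∫ p in v..(2*v), Hstar h v ≤ ∫ p in v..(2*v), Hstar h p := by
        apply intervalIntegral.integral_mono_on hle intervalIntegrable_const (hint v (2*v))
        intro p hp
        exact hmono hp.1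
      rw [intervalIntegral.integral_const] at hmon
      have : ((2*v - v) : ℝ) • Hstar h v = Hstar h v * v := by
        simp [smul_eq_mul]; ring
      linarith [this ▸ hmon]
    · have hle : 2 * v ≤ v := by linarith
      have hmon : ∫ p in (2*v)..v, Hstar h p ≤ ∫ p in (2*v)..v, Hstar h v := by
        apply intervalIntegral.integral_mono_on hle (hint (2*v) v) intervalIntegrable_const
        intro p hp
        exact hmono hp.2
      rw [intervalIntegral.integral_const] at hmon
      rw [intervalIntegral.integral_symm]
      have : ((v - 2*v) : ℝ) • Hstar h v = -(Hstar h v * v) := by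
        simp [smul_eq_mul]; ring
      linarith [this ▸ hmon]
  have h2 := hC₂ v
  have : (C₂ - 1) * jpot h v = C₂ * jpot h v - jpot h v := by ring
  linarith
end

section
/- Let y : ℝ → ℝ be twice continuously differentiable with compact support. Then ∫_ℝ y''(x)·sgn(y(x)) dx ≤ 0, where sgn(r) = r/|r| for r ≠ 0 and sgn(0) = 0. -/
/-!
For a monotone `C¹` function `φ`, integrating by parts against `y'` gives
`∫ y'' φ(y) = -∫ φ'(y) (y')² ≤ 0`. The signum is the bounded pointwise limit of the monotone
smooth functions `(2/π) arctan (s t)` as `s → ∞`, so the inequality passes to it by dominated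
convergence.
-/

open MeasureTheory Filter Topology Real

theorem integral_deriv_deriv_mul_comp_eq {y φ : ℝ → ℝ} (hy : ContDiff ℝ 2 y)
    (hsupp : HasCompactSupport y) (hφ : ContDiff ℝ 1 φ) :
    ∫ x, deriv (deriv y) x * φ (y x) = -∫ x, deriv φ (y x) * deriv y x ^ 2 := by
  have hy' : ContDiff ℝ 1 (deriv y) := hy.deriv'
  have hu : ∀ x, HasDerivAt (φ ∘ y) (deriv φ (y x) * deriv y x) x := fun x =>
    ((hφ.differentiable one_ne_zero).differentiableAt.hasDerivAt).comp x
      (hy.differentiable (by norm_num)).differentiableAt.hasDerivAt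
  have hv : ∀ x, HasDerivAt (deriv y) (deriv (deriv y) x) x := fun x =>
    (hy'.differentiable one_ne_zero).differentiableAt.hasDerivAt
  have hu_cont : Continuous (φ ∘ y) := hφ.continuous.comp hy.continuous
  have hu'_cont : Continuous fun x => deriv φ (y x) * deriv y x :=
    ((hφ.continuous_deriv le_rfl).comp hy.continuous).mul hy'.continuous
  -- `φ ∘ y` need not vanish at infinity, but each product below has a factor `y'` or `y''`.
  have hparts := integral_mul_deriv_eq_deriv_mul_of_integrable
    (fun x _ => hu x) (fun x _ => hv x)
    ((hu_cont.mul (hy'.continuous_deriv le_rfl)).integrable_of_hasCompactSupport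
      hsupp.deriv.deriv.mul_left)
    ((hu'_cont.mul hy'.continuous).integrable_of_hasCompactSupport hsupp.deriv.mul_left)
    ((hu_cont.mul hy'.continuous).integrable_of_hasCompactSupport hsupp.deriv.mul_left)
  simp only [Function.comp_apply] at hparts
  simp only [mul_comm (deriv (deriv y) _), hparts, mul_assoc, sq]

theorem integral_deriv_deriv_mul_comp_nonpos {y φ : ℝ → ℝ} (hy : ContDiff ℝ 2 y)
    (hsupp : HasCompactSupport y) (hφ : ContDiff ℝ 1 φ) (hφ_mono : Monotone φ) :
    ∫ x, deriv (deriv y) x * φ (y x) ≤ 0 := by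
  rw [integral_deriv_deriv_mul_comp_eq hy hsupp hφ, neg_nonpos]
  exact integral_nonneg fun x => mul_nonneg hφ_mono.deriv_nonneg (sq_nonneg _)

theorem integral_deriv_deriv_mul_comp_nonpos_of_tendsto {ι : Type*} {l : Filter ι}
    [l.IsCountablyGenerated] [l.NeBot] {y ψ : ℝ → ℝ} {φ : ι → ℝ → ℝ} {C : ℝ}
    (hy : ContDiff ℝ 2 y) (hsupp : HasCompactSupport y)
    (hφ : ∀ᶠ i in l, ContDiff ℝ 1 (φ i) ∧ Monotone (φ i))
    (hφ_bound : ∀ i t, |φ i t| ≤ C)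
    (hφ_lim : ∀ t, Tendsto (fun i => φ i t) l (𝓝 (ψ t))) :
    ∫ x, deriv (deriv y) x * ψ (y x) ≤ 0 := by
  have hy'' : Continuous (deriv (deriv y)) := hy.deriv'.continuous_deriv le_rfl
  refine le_of_tendsto (tendsto_integral_filter_of_dominated_convergence
    (fun x => |deriv (deriv y) x| * C) ?_ ?_ ?_ ?_)
    (hφ.mono fun i hi => integral_deriv_deriv_mul_comp_nonpos hy hsupp hi.1 hi.2)
  · exact hφ.mono fun i hi =>
      (hy''.mul (hi.1.continuous.comp hy.continuous)).aestronglyMeasurable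
  · refine Eventually.of_forall fun i => ae_of_all _ fun x => ?_
    rw [norm_mul, Real.norm_eq_abs, Real.norm_eq_abs]
    exact mul_le_mul_of_nonneg_left (hφ_bound i _) (abs_nonneg _)
  · exact ((hy''.integrable_of_hasCompactSupport hsupp.deriv.deriv).abs).mul_const C
  · exact ae_of_all _ fun x => (hφ_lim (y x)).const_mul _

theorem tendsto_arctan_mul_sign (t : ℝ) :
    Tendsto (fun s => 2 / π * arctan (s * t)) atTop (𝓝 (Real.sign t)) := by
  rcases lt_trichotomy t 0 with ht | rfl | ht
  · have h : Tendsto (fun s => arctan (s * t)) atTop (𝓝 (-(π / 2))) :=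
      (tendsto_nhds_of_tendsto_nhdsWithin tendsto_arctan_atBot).comp
        (tendsto_id.atTop_mul_const_of_neg ht)
    rw [sign_of_neg ht, show (-1 : ℝ) = 2 / π * -(π / 2) by field_simp]
    exact h.const_mul _
  · simp
  · have h : Tendsto (fun s => arctan (s * t)) atTop (𝓝 (π / 2)) :=
      (tendsto_nhds_of_tendsto_nhdsWithin tendsto_arctan_atTop).comp
        (tendsto_id.atTop_mul_const ht)
    rw [sign_of_pos ht, show (1 : ℝ) = 2 / π * (π / 2) by field_simp]
    exact h.const_mul _

theorem abs_two_div_pi_mul_arctan_le_one (x : ℝ) : |2 / π * arctan x| ≤ 1 := by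
  rw [abs_mul, abs_of_pos (by positivity : 0 < 2 / π), ← le_div_iff₀' (by positivity),
    one_div_div, abs_le]
  exact ⟨(neg_pi_div_two_lt_arctan x).le, (arctan_lt_pi_div_two x).le⟩

theorem kato_inequality_1d
    (y : ℝ → ℝ) (hy : ContDiff ℝ 2 y) (hsupp : HasCompactSupport y) :
    ∫ x : ℝ, deriv (deriv y) x * Real.sign (y x) ≤ 0 := by
  refine integral_deriv_deriv_mul_comp_nonpos_of_tendsto (l := atTop) (C := 1) hy hsupp ?_ ?_
    tendsto_arctan_mul_sign
  · filter_upwards [eventually_gt_atTop 0] with s hs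
    exact ⟨contDiff_const.mul (contDiff_arctan.comp (contDiff_const.mul contDiff_id)),
      (arctan_mono.comp (monotone_mul_left_of_nonneg hs.le)).const_mul
        (by positivity : 0 ≤ 2 / π)⟩
  · exact fun s t => abs_two_div_pi_mul_arctan_le_one (s * t)
end

section
/- Let y : ℝ → ℝ be continuously differentiable with y and y' Lebesgue integrable on ℝ, and let f : ℝ → ℝ be continuously differentiable with f and f' bounded. Then ∫_ℝ f(x)·y'(x)·sgn(y(x)) dx = −∫_ℝ f'(x)·|y(x)| dx, where sgn(r) = r/|r| for r ≠ 0 and sgn(0) = 0. -/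
/-!
Off the zeros of `y` at which `y' ≠ 0`, the function `|y|` is differentiable with derivative
`y' sgn y` (at a double zero both `|y|` and `y` are `o(t - x)`). Those exceptional zeros are
isolated, hence countable, so the fundamental theorem of calculus with a countable exceptional set
applies to `f |y|` on every interval `[-r, r]`. Since `y` and `y'` are integrable, `y` and therefore
`f |y|` vanish at `±∞`, and the integral of `(f |y|)' = f' |y| + f y' sgn y` over `ℝ` is zero.
-/

open MeasureTheory Set Filter Topology

namespace Real

theorem sign_eq_coe_sign (r : ℝ) : Real.sign r = (SignType.sign r : ℝ) := by
  rcases lt_trichotomy r 0 with h | rfl | h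
  · simp [Real.sign_of_neg h, _root_.sign_neg h]
  · simp
  · simp [Real.sign_of_pos h, _root_.sign_pos h]

theorem abs_sign_le_one (r : ℝ) : |Real.sign r| ≤ 1 := by
  rcases Real.sign_apply_eq r with h | h | h <;> simp [h]

theorem monotone_sign : Monotone Real.sign := by
  intro a b hab
  unfold Real.sign
  split_ifs <;> linarith

theorem measurable_sign : Measurable Real.sign :=
  monotone_sign.measurable

end Real

theorem MeasureTheory.Integrable.mul_mul_sign_comp {α : Type*} [MeasurableSpace α]
    {μ : Measure α} {f g u : α → ℝ} {C : ℝ} (hg : Integrable g μ)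
    (hf : AEStronglyMeasurable f μ) (hu : AEMeasurable u μ) (hfC : ∀ x, |f x| ≤ C) :
    Integrable (fun x => f x * (g x * Real.sign (u x))) μ := by
  have hbound : ∀ x, ‖f x * Real.sign (u x)‖ ≤ C := fun x => by
    rw [Real.norm_eq_abs, abs_mul]
    exact (mul_le_of_le_one_right (abs_nonneg _) (Real.abs_sign_le_one _)).trans (hfC x)
  refine (hg.bdd_mul (hf.mul (Real.measurable_sign.comp_aemeasurable hu).aestronglyMeasurable)
    (ae_of_all _ hbound)).congr (ae_of_all _ fun x => ?_)
  simp only [Pi.mul_apply, Function.comp_apply]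
  ring

theorem HasDerivAt.abs_of_eq_zero_imp_eq_zero {f : ℝ → ℝ} {f' x : ℝ} (hf : HasDerivAt f f' x)
    (h : f x = 0 → f' = 0) : HasDerivAt (fun t => |f t|) (f' * Real.sign (f x)) x := by
  by_cases hx : f x = 0
  · obtain rfl := h hx
    rw [zero_mul, hasDerivAt_iff_isLittleO]
    simpa [hx] using (hasDerivAt_iff_isLittleO.1 hf).norm_left
  · rw [mul_comm, Real.sign_eq_coe_sign]
    exact (hasDerivAt_abs hx).comp x hf

-- Such points are isolated in the level set `f ⁻¹' {c}`.
theorem countable_setOf_eq_and_deriv_ne_zero {E : Type*} [NormedAddCommGroup E]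
    [NormedSpace ℝ E] (f : ℝ → E) (c : E) : {x | f x = c ∧ deriv f x ≠ 0}.Countable := by
  refine (HereditarilyLindelofSpace.isLindelof _).countable_of_isDiscrete
    (isDiscrete_iff_nhdsNE.2 ?_)
  rintro x ⟨-, hd⟩
  rw [← disjoint_iff, disjoint_principal_right]
  filter_upwards [(differentiableAt_of_deriv_ne_zero hd).hasDerivAt.eventually_ne (c := c) hd]
    with z hz hzc using hz hzc.1

theorem integral_of_hasDerivAt_off_countable_of_tendsto {E : Type*} [NormedAddCommGroup E]
    [NormedSpace ℝ E] [CompleteSpace E] {f f' : ℝ → E} {s : Set ℝ} {m n : E}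
    (hs : s.Countable) (hcont : Continuous f) (hderiv : ∀ x ∉ s, HasDerivAt f (f' x) x)
    (hf' : Integrable f') (hbot : Tendsto f atBot (𝓝 m)) (htop : Tendsto f atTop (𝓝 n)) :
    ∫ x, f' x = n - m := by
  have hftc : ∀ r : ℝ, ∫ x in -r..r, f' x = f r - f (-r) := fun r =>
    integral_eq_of_hasDerivAt_off_countable f f' hs hcont.continuousOn
      (fun x hx => hderiv x hx.2) hf'.intervalIntegrable
  refine tendsto_nhds_unique (intervalIntegral_tendsto_integral hf' tendsto_neg_atTop_atBot
    tendsto_id) ?_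
  simp only [id, hftc]
  exact htop.sub (hbot.comp tendsto_neg_atTop_atBot)

theorem drift_sign_integration_by_parts
    (y f : ℝ → ℝ) (hy : ContDiff ℝ 1 y)
    (hyi : Integrable y) (hy'i : Integrable (deriv y))
    (hf : ContDiff ℝ 1 f)
    (Mf Mf' : ℝ) (hfb : ∀ x : ℝ, |f x| ≤ Mf) (hf'b : ∀ x : ℝ, |deriv f x| ≤ Mf') :
    ∫ x : ℝ, f x * deriv y x * Real.sign (y x) = -∫ x : ℝ, deriv f x * |y x| := by
  have hyd : ∀ x, HasDerivAt y (deriv y x) x :=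
    fun x => (hy.differentiable one_ne_zero x).hasDerivAt
  have hfd : ∀ x, HasDerivAt f (deriv f x) x :=
    fun x => (hf.differentiable one_ne_zero x).hasDerivAt
  have hdrift : Integrable fun x => f x * (deriv y x * Real.sign (y x)) :=
    hy'i.mul_mul_sign_comp hf.continuous.aestronglyMeasurable hy.continuous.aemeasurable hfb
  have hweight : Integrable fun x => deriv f x * |y x| :=
    hyi.abs.bdd_mul (hf.continuous_deriv le_rfl).aestronglyMeasurable (ae_of_all _ hf'b)
  have hvanish : ∀ l, Tendsto y l (𝓝 0) → Tendsto (fun x => f x * |y x|) l (𝓝 0) := by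
    intro l hl
    refine isBoundedUnder_le_mul_tendsto_zero ⟨Mf, eventually_map.2 (.of_forall hfb)⟩ ?_
    simpa using hl.abs
  have key := integral_of_hasDerivAt_off_countable_of_tendsto
    (countable_setOf_eq_and_deriv_ne_zero y 0) (hf.continuous.mul hy.continuous.abs)
    (fun x hx => (hfd x).mul <|
      (hyd x).abs_of_eq_zero_imp_eq_zero fun h => not_not.1 fun h' => hx ⟨h, h'⟩)
    (hweight.add hdrift)
    (hvanish _ (tendsto_zero_of_hasDerivAt_of_integrableOn_Iic (a := 0) (fun x _ => hyd x)
      hy'i.integrableOn hyi.integrableOn))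
    (hvanish _ (tendsto_zero_of_hasDerivAt_of_integrableOn_Ioi (a := 0) (fun x _ => hyd x)
      hy'i.integrableOn hyi.integrableOn))
  rw [integral_add hweight hdrift, sub_zero] at key
  simp only [mul_assoc]
  linarith
end

section
/- Let ν > 0 and let y : ℝ → ℝ be continuous, bounded and Lebesgue integrable. Then z(x) = (1/(2√ν)) ∫_ℝ exp(−√ν·|x − t|)·y(t) dt is twice continuously differentiable and satisfies ν·z(x) − z''(x) = y(x) for every x ∈ ℝ. -/
/-!
Split the kernel at `t = x`: with `a = √ν`,
`2a z(x) = e^{-ax} L(x) + e^{ax} R(x)`, where `L(x) = ∫_{t ≤ x} e^{at} y(t)` and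
`R(x) = ∫_{t ≥ x} e^{-at} y(t)`. By the fundamental theorem of calculus `L' = e^{ax} y` and
`R' = -e^{-ax} y`; the `y`-terms cancel in `z'`, and in `z''` they add up to `-y` while the rest
reproduces `a² z = ν z`.
-/

open MeasureTheory Real Set

section Primitives

variable {f : ℝ → ℝ}

theorem hasDerivAt_setIntegral_Iic (hf : Continuous f) (hfi : ∀ x, IntegrableOn f (Iic x))
    (x : ℝ) : HasDerivAt (fun u => ∫ t in Iic u, f t) (f x) x := by
  have hsplit :
      (fun u => ∫ t in Iic u, f t) = fun u => (∫ t in Iic 0, f t) + ∫ t in 0..u, f t :=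
    funext fun u => by
      rw [← intervalIntegral.integral_Iic_sub_Iic (hfi 0) (hfi u), add_sub_cancel]
  rw [hsplit]
  exact ((hf.integral_hasStrictDerivAt 0 x).hasDerivAt).const_add _

theorem hasDerivAt_setIntegral_Ici (hf : Continuous f) (hfi : ∀ x, IntegrableOn f (Ici x))
    (x : ℝ) : HasDerivAt (fun u => ∫ t in Ici u, f t) (-f x) x := by
  have hsplit :
      (fun u => ∫ t in Ici u, f t) = fun u => (∫ t in Ici 0, f t) - ∫ t in 0..u, f t :=
    funext fun u => by
      rw [← intervalIntegral.integral_Ici_sub_Ici' (hfi 0) (hfi u), sub_sub_cancel]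
  rw [hsplit]
  exact ((hf.integral_hasStrictDerivAt 0 x).hasDerivAt).const_sub _

end Primitives

theorem hasDerivAt_exp_mul (b x : ℝ) : HasDerivAt (fun x => exp (b * x)) (b * exp (b * x)) x := by
  simpa [mul_comm] using ((hasDerivAt_id x).const_mul b).exp

section Resolvent

variable {a : ℝ} {y : ℝ → ℝ}

theorem integrableOn_Iic_exp_mul_mul (ha : 0 ≤ a) (hy : Integrable y) (x : ℝ) :
    IntegrableOn (fun t => exp (a * t) * y t) (Iic x) := by
  refine hy.integrableOn.bdd_mul (c := exp (a * x)) (by fun_prop) ?_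
  refine (ae_restrict_iff' measurableSet_Iic).2 (ae_of_all _ fun t ht => ?_)
  rw [norm_of_nonneg (exp_pos _).le]
  exact exp_le_exp.2 (mul_le_mul_of_nonneg_left ht ha)

theorem integrableOn_Ici_exp_neg_mul_mul (ha : 0 ≤ a) (hy : Integrable y) (x : ℝ) :
    IntegrableOn (fun t => exp (-a * t) * y t) (Ici x) := by
  refine hy.integrableOn.bdd_mul (c := exp (-a * x)) (by fun_prop) ?_
  refine (ae_restrict_iff' measurableSet_Ici).2 (ae_of_all _ fun t ht => ?_)
  rw [norm_of_nonneg (exp_pos _).le]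
  exact exp_le_exp.2 (mul_le_mul_of_nonpos_left ht (neg_nonpos.2 ha))

theorem integrable_exp_neg_mul_abs_sub_mul (ha : 0 ≤ a) (hy : Integrable y) (x : ℝ) :
    Integrable (fun t => exp (-a * |x - t|) * y t) := by
  refine hy.bdd_mul (c := 1) (by fun_prop) (ae_of_all _ fun t => ?_)
  rw [norm_of_nonneg (exp_pos _).le, exp_le_one_iff]
  exact mul_nonpos_of_nonpos_of_nonneg (neg_nonpos.2 ha) (abs_nonneg _)

noncomputable def resolventConvolution (a : ℝ) (y : ℝ → ℝ) (x : ℝ) : ℝ :=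
  1 / (2 * a) * ∫ t, exp (-a * |x - t|) * y t

noncomputable def expLeftIntegral (a : ℝ) (y : ℝ → ℝ) (x : ℝ) : ℝ :=
  ∫ t in Iic x, exp (a * t) * y t

noncomputable def expRightIntegral (a : ℝ) (y : ℝ → ℝ) (x : ℝ) : ℝ :=
  ∫ t in Ici x, exp (-a * t) * y t

noncomputable def resolventConvolutionDeriv (a : ℝ) (y : ℝ → ℝ) (x : ℝ) : ℝ :=
  (exp (a * x) * expRightIntegral a y x - exp (-a * x) * expLeftIntegral a y x) / 2

theorem integral_exp_neg_mul_abs_sub_mul_eq (ha : 0 ≤ a) (hy : Integrable y) (x : ℝ) :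
    ∫ t, exp (-a * |x - t|) * y t =
      exp (-a * x) * expLeftIntegral a y x + exp (a * x) * expRightIntegral a y x := by
  have hint := integrable_exp_neg_mul_abs_sub_mul ha hy x
  rw [← intervalIntegral.integral_Iic_add_Ioi hint.integrableOn hint.integrableOn,
    expLeftIntegral, expRightIntegral, integral_Ici_eq_integral_Ioi, ← integral_const_mul,
    ← integral_const_mul]
  congr 1
  · refine setIntegral_congr_fun measurableSet_Iic fun t (ht : t ≤ x) => ?_
    rw [abs_of_nonneg (sub_nonneg.2 ht), ← mul_assoc, ← exp_add]
    ring_nf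
  · refine setIntegral_congr_fun measurableSet_Ioi fun t (ht : x < t) => ?_
    rw [abs_of_neg (sub_neg.2 ht), ← mul_assoc, ← exp_add]
    ring_nf

theorem hasDerivAt_expLeftIntegral (ha : 0 ≤ a) (hyc : Continuous y) (hy : Integrable y)
    (x : ℝ) : HasDerivAt (expLeftIntegral a y) (exp (a * x) * y x) x :=
  hasDerivAt_setIntegral_Iic (by fun_prop) (integrableOn_Iic_exp_mul_mul ha hy) x

theorem hasDerivAt_expRightIntegral (ha : 0 ≤ a) (hyc : Continuous y) (hy : Integrable y)
    (x : ℝ) : HasDerivAt (expRightIntegral a y) (-(exp (-a * x) * y x)) x :=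
  hasDerivAt_setIntegral_Ici (by fun_prop) (integrableOn_Ici_exp_neg_mul_mul ha hy) x

theorem hasDerivAt_resolventConvolution (ha : 0 < a) (hyc : Continuous y) (hy : Integrable y)
    (x : ℝ) : HasDerivAt (resolventConvolution a y) (resolventConvolutionDeriv a y x) x := by
  have hform : resolventConvolution a y = fun x => 1 / (2 * a) *
      (exp (-a * x) * expLeftIntegral a y x + exp (a * x) * expRightIntegral a y x) :=
    funext fun x => by rw [resolventConvolution, integral_exp_neg_mul_abs_sub_mul_eq ha.le hy]
  rw [hform]
  refine ((((hasDerivAt_exp_mul (-a) x).fun_mul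
    (hasDerivAt_expLeftIntegral ha.le hyc hy x)).fun_add ((hasDerivAt_exp_mul a x).fun_mul
    (hasDerivAt_expRightIntegral ha.le hyc hy x))).const_mul (1 / (2 * a))).congr_deriv ?_
  rw [resolventConvolutionDeriv]
  field_simp
  ring

theorem hasDerivAt_resolventConvolutionDeriv (ha : 0 < a) (hyc : Continuous y)
    (hy : Integrable y) (x : ℝ) :
    HasDerivAt (resolventConvolutionDeriv a y) (a ^ 2 * resolventConvolution a y x - y x) x := by
  refine ((((hasDerivAt_exp_mul a x).fun_mul
    (hasDerivAt_expRightIntegral ha.le hyc hy x)).fun_sub ((hasDerivAt_exp_mul (-a) x).fun_mul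
    (hasDerivAt_expLeftIntegral ha.le hyc hy x))).div_const 2).congr_deriv ?_
  have hexp : exp (-a * x) * exp (a * x) = 1 := by rw [← exp_add]; simp
  have hcoef : a ^ 2 * (1 / (2 * a)) = a / 2 := by field_simp
  rw [resolventConvolution, integral_exp_neg_mul_abs_sub_mul_eq ha.le hy]
  linear_combination -(y x) * hexp -
    (exp (-a * x) * expLeftIntegral a y x + exp (a * x) * expRightIntegral a y x) * hcoef

theorem deriv_resolventConvolution (ha : 0 < a) (hyc : Continuous y) (hy : Integrable y) :
    deriv (resolventConvolution a y) = resolventConvolutionDeriv a y :=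
  funext fun x => (hasDerivAt_resolventConvolution ha hyc hy x).deriv

theorem deriv_deriv_resolventConvolution (ha : 0 < a) (hyc : Continuous y) (hy : Integrable y)
    (x : ℝ) :
    deriv (deriv (resolventConvolution a y)) x = a ^ 2 * resolventConvolution a y x - y x := by
  rw [deriv_resolventConvolution ha hyc hy]
  exact (hasDerivAt_resolventConvolutionDeriv ha hyc hy x).deriv

theorem contDiff_resolventConvolution (ha : 0 < a) (hyc : Continuous y) (hy : Integrable y) :
    ContDiff ℝ 2 (resolventConvolution a y) := by
  have hdiff : Differentiable ℝ (resolventConvolution a y) := fun x =>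
    (hasDerivAt_resolventConvolution ha hyc hy x).differentiableAt
  have hdiff' : Differentiable ℝ (resolventConvolutionDeriv a y) := fun x =>
    (hasDerivAt_resolventConvolutionDeriv ha hyc hy x).differentiableAt
  have hderiv' : deriv (resolventConvolutionDeriv a y) = fun x =>
      a ^ 2 * resolventConvolution a y x - y x :=
    funext fun x => (hasDerivAt_resolventConvolutionDeriv ha hyc hy x).deriv
  rw [show (2 : WithTop ℕ∞) = 1 + 1 from rfl, contDiff_succ_iff_deriv,
    deriv_resolventConvolution ha hyc hy, show (1 : WithTop ℕ∞) = 0 + 1 from rfl,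
    contDiff_succ_iff_deriv, hderiv', contDiff_zero]
  exact ⟨hdiff, by simp, hdiff', by simp, (continuous_const.mul hdiff.continuous).sub hyc⟩

end Resolvent

theorem resolvent_kernel_solves_equation_general
    (ν : ℝ) (hν : 0 < ν) (y : ℝ → ℝ)
    (hyc : Continuous y) (hyi : Integrable y)
    (z : ℝ → ℝ)
    (hz : ∀ x : ℝ, z x =
      (1 / (2 * Real.sqrt ν)) * ∫ t : ℝ, Real.exp (-Real.sqrt ν * |x - t|) * y t) :
    ContDiff ℝ 2 z ∧ ∀ x : ℝ, ν * z x - deriv (deriv z) x = y x := by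
  have ha : 0 < √ν := sqrt_pos.2 hν
  obtain rfl : z = resolventConvolution (√ν) y := funext hz
  refine ⟨contDiff_resolventConvolution ha hyc hyi, fun x => ?_⟩
  rw [deriv_deriv_resolventConvolution ha hyc hyi, sq_sqrt hν.le]
  ring

theorem resolvent_kernel_solves_equation
    (ν : ℝ) (hν : 0 < ν) (y : ℝ → ℝ)
    (hyc : Continuous y) (hyb : ∃ M : ℝ, ∀ x : ℝ, |y x| ≤ M) (hyi : Integrable y)
    (z : ℝ → ℝ)
    (hz : ∀ x : ℝ, z x =
      (1 / (2 * Real.sqrt ν)) * ∫ t : ℝ, Real.exp (-Real.sqrt ν * |x - t|) * y t) :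
    ContDiff ℝ 2 z ∧ ∀ x : ℝ, ν * z x - deriv (deriv z) x = y x :=
  resolvent_kernel_solves_equation_general ν hν y hyc hyi z hz
end

section
/- There exists a constant C > 0, depending only on sup|f| and sup|f'|, with the following property: for every ν > 0, every λ ≥ C·(1 + ν² + ν^{-2}), every y : ℝ → ℝ continuously differentiable with y, y' square-integrable and y(x) → 0 as |x| → ∞, and every z : ℝ → ℝ twice continuously differentiable with z, z', z'' square-integrable, z(x) → 0 and z'(x) → 0 as |x| → ∞, satisfying ν·z − z'' = y on ℝ, one has (λ − ν²)·∫_ℝ y·z dx − ∫_ℝ f·y'·z dx + ν·∫_ℝ y² dx ≥ (ν/2)·∫_ℝ y² dx. -/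
/-!
Two integrations by parts do the work. Since `ν z - z'' = y`, `∫ y z = ν ‖z‖² + ‖z'‖²`, so the
first term controls `‖z‖²` and `‖z'‖²` with weight `λ - ν²`. Moving the derivative off `y`,
`∫ f y' z = -∫ f' y z - ∫ f y z'`, and Young's inequality with weight `ν / 2` bounds each of
these by `(ν / 4) ‖y‖²` plus a multiple of `‖z‖²` or `‖z'‖²` that `λ - ν²` absorbs once
`λ ≥ (1 + sup|f|² + sup|f'|²)(1 + ν² + ν⁻²)`.
-/

open MeasureTheory Filter

lemma abs_mul_mul_le_of_abs_le {a b c A ε : ℝ} (hε : 0 < ε) (ha : |a| ≤ A) :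
    |a * b * c| ≤ ε / 2 * b ^ 2 + A ^ 2 / (2 * ε) * c ^ 2 := by
  have hyoung : 2 * |b| * (A * |c|) ≤ ε * |b| ^ 2 + ε⁻¹ * (A * |c|) ^ 2 :=
    two_mul_le_add_mul_sq hε
  rw [sq_abs, mul_pow, sq_abs] at hyoung
  calc |a * b * c| = |a| * (|b| * |c|) := by rw [abs_mul, abs_mul, mul_assoc]
    _ ≤ A * (|b| * |c|) := by gcongr
    _ ≤ ε / 2 * b ^ 2 + A ^ 2 / (2 * ε) * c ^ 2 := by
      field_simp
      field_simp at hyoung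
      linarith

section

variable {g u v : ℝ → ℝ} {A : ℝ}

lemma integrable_mul_mul_of_abs_le (hg : AEStronglyMeasurable g volume) (hgA : ∀ x, |g x| ≤ A)
    (hu : MemLp u 2 volume) (hv : MemLp v 2 volume) :
    Integrable (fun x => g x * u x * v x) volume := by
  have huv : Integrable (fun x => u x * v x) volume := hu.integrable_mul hv
  simpa only [mul_assoc] using huv.bdd_mul hg (ae_of_all _ hgA)

lemma abs_integral_mul_mul_le {ε : ℝ} (hε : 0 < ε) (hg : AEStronglyMeasurable g volume)
    (hgA : ∀ x, |g x| ≤ A) (hu : MemLp u 2 volume) (hv : MemLp v 2 volume) :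
    |∫ x, g x * u x * v x| ≤ ε / 2 * (∫ x, u x ^ 2) + A ^ 2 / (2 * ε) * (∫ x, v x ^ 2) := by
  have hu2 := hu.integrable_sq.const_mul (ε / 2)
  have hv2 := hv.integrable_sq.const_mul (A ^ 2 / (2 * ε))
  have hrhs : ε / 2 * (∫ x, u x ^ 2) + A ^ 2 / (2 * ε) * (∫ x, v x ^ 2) =
      ∫ x, ε / 2 * u x ^ 2 + A ^ 2 / (2 * ε) * v x ^ 2 := by
    rw [integral_add hu2 hv2, integral_const_mul, integral_const_mul]
  rw [hrhs]
  exact (abs_integral_le_integral_abs).trans <|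
    integral_mono (integrable_mul_mul_of_abs_le hg hgA hu hv).abs (hu2.add hv2)
      fun x => abs_mul_mul_le_of_abs_le hε (hgA x)

end

section

variable {z : ℝ → ℝ} (hz : Differentiable ℝ z) (hz' : Differentiable ℝ (deriv z))
  (hz2 : MemLp z 2 volume) (hz'2 : MemLp (deriv z) 2 volume)
  (hz''2 : MemLp (deriv (deriv z)) 2 volume)
include hz hz' hz2 hz'2 hz''2

lemma integral_mul_deriv_deriv_eq_neg :
    ∫ x, z x * deriv (deriv z) x = -∫ x, deriv z x ^ 2 := by
  simp_rw [sq]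
  exact integral_mul_deriv_eq_deriv_mul_of_integrable (fun x _ => (hz x).hasDerivAt)
    (fun x _ => (hz' x).hasDerivAt) (hz2.integrable_mul hz''2) (hz'2.integrable_mul hz'2)
    (hz2.integrable_mul hz'2)

lemma integral_mul_eq_of_smul_sub_deriv_deriv_eq {y : ℝ → ℝ} {ν : ℝ}
    (hzy : ∀ x, ν * z x - deriv (deriv z) x = y x) :
    ∫ x, y x * z x = ν * (∫ x, z x ^ 2) + ∫ x, deriv z x ^ 2 := by
  have hzz'' : Integrable (fun x => z x * deriv (deriv z) x) volume := hz2.integrable_mul hz''2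
  calc ∫ x, y x * z x = ∫ x, ν * z x ^ 2 - z x * deriv (deriv z) x := by
        congr 1; funext x; rw [← hzy x]; ring
    _ = ν * (∫ x, z x ^ 2) + ∫ x, deriv z x ^ 2 := by
        rw [integral_sub (hz2.integrable_sq.const_mul ν) hzz'', integral_const_mul,
          integral_mul_deriv_deriv_eq_neg hz hz' hz2 hz'2 hz''2, sub_neg_eq_add]

end

lemma integral_mul_deriv_mul_eq {f y z : ℝ → ℝ} {Mf Mf' : ℝ} (hf : ContDiff ℝ 1 f)
    (hfM : ∀ x, |f x| ≤ Mf) (hf'M : ∀ x, |deriv f x| ≤ Mf') (hy : Differentiable ℝ y)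
    (hz : Differentiable ℝ z) (hy2 : MemLp y 2 volume) (hy'2 : MemLp (deriv y) 2 volume)
    (hz2 : MemLp z 2 volume) (hz'2 : MemLp (deriv z) 2 volume) :
    ∫ x, f x * deriv y x * z x =
      -(∫ x, deriv f x * y x * z x) - ∫ x, f x * y x * deriv z x := by
  have hfm : AEStronglyMeasurable f volume := hf.continuous.aestronglyMeasurable
  have hf'm : AEStronglyMeasurable (deriv f) volume :=
    (hf.continuous_deriv le_rfl).aestronglyMeasurable
  have h1 := integrable_mul_mul_of_abs_le hf'm hf'M hz2 hy2
  have h2 := integrable_mul_mul_of_abs_le hfm hfM hz'2 hy2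
  have hIBP := integral_mul_deriv_eq_deriv_mul_of_integrable (u := fun x => f x * z x) (v := y)
    (u' := fun x => deriv f x * z x + f x * deriv z x)
    (fun x _ => (hf.differentiable one_ne_zero x).hasDerivAt.mul (hz x).hasDerivAt)
    (fun x _ => (hy x).hasDerivAt) (integrable_mul_mul_of_abs_le hfm hfM hz2 hy'2)
    ((h1.add h2).congr (ae_of_all _ fun x => (add_mul _ _ _).symm))
    (integrable_mul_mul_of_abs_le hfm hfM hz2 hy2)
  calc ∫ x, f x * deriv y x * z x = ∫ x, f x * z x * deriv y x := by
        congr 1; funext x; ring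
    _ = -∫ x, deriv f x * z x * y x + f x * deriv z x * y x := by
        simpa only [add_mul] using hIBP
    _ = -(∫ x, deriv f x * y x * z x) - ∫ x, f x * y x * deriv z x := by
        rw [integral_add h1 h2, neg_add']
        simp only [mul_right_comm _ (z _), mul_right_comm _ (deriv z _)]

lemma sq_div_le_sub_sq_of_le {a b ν lam : ℝ} (hν : 0 < ν)
    (h : (1 + a ^ 2 + b ^ 2) * (1 + ν ^ 2 + ν⁻¹ ^ 2) ≤ lam) :
    a ^ 2 / ν ≤ (lam - ν ^ 2) * ν ∧ b ^ 2 / ν ≤ lam - ν ^ 2 := by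
  have ha : 0 ≤ a ^ 2 * ν⁻¹ ^ 2 := by positivity
  have hb : 0 ≤ b ^ 2 * (1 + ν⁻¹ ^ 2) := by positivity
  have hK : a ^ 2 * ν⁻¹ ^ 2 + b ^ 2 * (1 + ν⁻¹ ^ 2) ≤ lam - ν ^ 2 := by
    nlinarith [mul_nonneg (sq_nonneg a) (sq_nonneg ν), mul_nonneg (sq_nonneg b) (sq_nonneg ν)]
  have hinv : ν⁻¹ ≤ 1 + ν⁻¹ ^ 2 := by nlinarith [sq_nonneg (ν⁻¹ - 1)]
  constructor
  · calc a ^ 2 / ν = a ^ 2 * ν⁻¹ ^ 2 * ν := by field_simp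
      _ ≤ (lam - ν ^ 2) * ν := by gcongr; linarith
  · calc b ^ 2 / ν = b ^ 2 * ν⁻¹ := div_eq_mul_inv _ _
      _ ≤ b ^ 2 * (1 + ν⁻¹ ^ 2) := by gcongr
      _ ≤ lam - ν ^ 2 := by linarith

theorem coercivity_estimate (Mf Mf' : ℝ) :
    ∃ C : ℝ, 0 < C ∧
      ∀ (f : ℝ → ℝ), ContDiff ℝ 1 f → (∀ x : ℝ, |f x| ≤ Mf) →
        (∀ x : ℝ, |deriv f x| ≤ Mf') →
      ∀ (ν : ℝ), 0 < ν → ∀ (lam : ℝ), C * (1 + ν ^ 2 + ν⁻¹ ^ 2) ≤ lam →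
      ∀ (y : ℝ → ℝ), ContDiff ℝ 1 y →
        MemLp y 2 (volume : Measure ℝ) →
        MemLp (deriv y) 2 (volume : Measure ℝ) →
        Tendsto y (cocompact ℝ) (nhds 0) →
      ∀ (z : ℝ → ℝ), ContDiff ℝ 2 z →
        MemLp z 2 (volume : Measure ℝ) →
        MemLp (deriv z) 2 (volume : Measure ℝ) →
        MemLp (deriv (deriv z)) 2 (volume : Measure ℝ) →
        Tendsto z (cocompact ℝ) (nhds 0) →
        Tendsto (deriv z) (cocompact ℝ) (nhds 0) →
        (∀ x : ℝ, ν * z x - deriv (deriv z) x = y x) →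
      (ν / 2) * (∫ x : ℝ, y x ^ 2) ≤
        (lam - ν ^ 2) * (∫ x : ℝ, y x * z x) - (∫ x : ℝ, f x * deriv y x * z x) +
          ν * (∫ x : ℝ, y x ^ 2) := by
  refine ⟨1 + Mf' ^ 2 + Mf ^ 2, by positivity, ?_⟩
  intro f hf hfM hf'M ν hν lam hlam y hy hy2 hy'2 _ z hz hz2 hz'2 hz''2 _ _ hzy
  have hzd : Differentiable ℝ z := hz.differentiable two_ne_zero
  rw [integral_mul_eq_of_smul_sub_deriv_deriv_eq hzd hz.differentiable_deriv_two hz2 hz'2 hz''2 hzy,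
    integral_mul_deriv_mul_eq hf hfM hf'M (hy.differentiable one_ne_zero) hzd hy2 hy'2 hz2 hz'2]
  have h1 := abs_integral_mul_mul_le (half_pos hν)
    (hf.continuous_deriv le_rfl).aestronglyMeasurable hf'M hy2 hz2
  have h2 := abs_integral_mul_mul_le (half_pos hν) hf.continuous.aestronglyMeasurable hfM hy2 hz'2
  obtain ⟨hQ, hR⟩ := sq_div_le_sub_sq_of_le hν hlam
  have hz0 : 0 ≤ ∫ x, z x ^ 2 := integral_nonneg fun x => sq_nonneg _
  have hz'0 : 0 ≤ ∫ x, deriv z x ^ 2 := integral_nonneg fun x => sq_nonneg _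
  rw [show 2 * (ν / 2) = ν by ring] at h1 h2
  linarith [mul_le_mul_of_nonneg_right hQ hz0, mul_le_mul_of_nonneg_right hR hz'0,
    neg_abs_le (∫ x, deriv f x * y x * z x), neg_abs_le (∫ x, f x * y x * deriv z x)]
end

section
/- Let X be a (nonempty, complete) normed vector space over ℝ, let A : X → X be a map, and let λ₀ ≥ 0. Assume: (i) for every λ > λ₀ and all u, v ∈ X, (λ − λ₀)·‖u − v‖ ≤ ‖(λ·u + A u) − (λ·v + A v)‖; (ii) there exists λ₁ > λ₀ such that the map u ↦ λ₁·u + A u is surjective onto X. Then for every λ > λ₀ the map u ↦ λ·u + A u is surjective onto X, and its inverse is Lipschitz with constant (λ − λ₀)^{-1}. -/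
open Function

private lemma qare_step
    {X : Type*} [NormedAddCommGroup X] [NormedSpace ℝ X] [CompleteSpace X]
    (A : X → X) (lam₀ : ℝ)
    (hcontr : ∀ lam : ℝ, lam₀ < lam → ∀ u v : X,
      (lam - lam₀) * ‖u - v‖ ≤ ‖(lam • u + A u) - (lam • v + A v)‖)
    {lam mu : ℝ} (hlam : lam₀ < lam) (hmu : lam₀ < mu)
    (hclose : |mu - lam| < lam - lam₀)
    (hsurj : Surjective (fun u : X => lam • u + A u)) :
    Surjective (fun u : X => mu • u + A u) := by
  intro η
  haveI : Nonempty X := ⟨η⟩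
  choose J hJ using hsurj
  simp only at hJ
  have hpos : (0:ℝ) < lam - lam₀ := sub_pos.mpr hlam
  set g : X → X := fun u => J (η + (lam - mu) • u) with hg
  set K : NNReal := ⟨|lam - mu| / (lam - lam₀), by positivity⟩ with hK
  have hlip : LipschitzWith K g := by
    apply LipschitzWith.of_dist_le_mul
    intro u v
    simp only [dist_eq_norm, hg]
    have h1 := hcontr lam hlam (J (η + (lam - mu) • u)) (J (η + (lam - mu) • v))
    rw [hJ, hJ] at h1
    have h2 : (η + (lam - mu) • u) - (η + (lam - mu) • v) = (lam - mu) • (u - v) := by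
      rw [smul_sub]; abel
    rw [h2, norm_smul, Real.norm_eq_abs] at h1
    have : (K:ℝ) = |lam - mu| / (lam - lam₀) := rfl
    rw [this, div_mul_eq_mul_div, le_div_iff₀ hpos, mul_comm]
    exact h1
  have hKlt : K < 1 := by
    rw [← NNReal.coe_lt_coe]
    have : (K:ℝ) = |lam - mu| / (lam - lam₀) := rfl
    rw [this, NNReal.coe_one, div_lt_one hpos, abs_sub_comm]
    exact hclose
  have hc : ContractingWith K g := ⟨hKlt, hlip⟩
  set u := hc.fixedPoint g with hu
  have hfix : g u = u := hc.fixedPoint_isFixedPt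
  have : lam • u + A u = η + (lam - mu) • u := by
    conv_lhs => rw [← hfix]
    exact hJ _
  have : mu • u + A u = η := by
    have h3 : (lam - mu) • u = lam • u - mu • u := sub_smul lam mu u
    rw [h3] at this
    calc mu • u + A u = (lam • u + A u) - (lam • u - mu • u) := by abel
      _ = η := by rw [this]; abel
  exact ⟨u, this⟩

theorem quasi_accretive_range_extension
    (X : Type*) [NormedAddCommGroup X] [NormedSpace ℝ X] [CompleteSpace X]
    (A : X → X) (lam₀ : ℝ) (hlam₀ : 0 ≤ lam₀)
    (hcontr : ∀ lam : ℝ, lam₀ < lam → ∀ u v : X,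
      (lam - lam₀) * ‖u - v‖ ≤ ‖(lam • u + A u) - (lam • v + A v)‖)
    (hrange : ∃ lam₁ : ℝ, lam₀ < lam₁ ∧
      Function.Surjective (fun u : X => lam₁ • u + A u)) :
    ∀ lam : ℝ, lam₀ < lam →
      Function.Surjective (fun u : X => lam • u + A u) ∧
      ∀ u v : X, ‖u - v‖ ≤ (lam - lam₀)⁻¹ * ‖(lam • u + A u) - (lam • v + A v)‖ := by
  obtain ⟨lam₁, h1, hs1⟩ := hrange
  set d := lam₁ - lam₀ with hd
  have hdpos : 0 < d := sub_pos.mpr h1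
  have main : ∀ n : ℕ, ∀ mu : ℝ, lam₀ < mu → mu < lam₀ + 2 ^ n * d →
      Surjective (fun u : X => mu • u + A u) := by
    intro n
    induction n with
    | zero =>
      intro mu hmu hlt
      simp only [pow_zero, one_mul] at hlt
      refine qare_step A lam₀ hcontr h1 hmu ?_ hs1
      rw [abs_lt]; constructor <;> linarith
    | succ n ih =>
      intro mu hmu hlt
      set lam := ((mu + lam₀)/2 + (lam₀ + 2 ^ n * d))/2 with hl
      have hpow : (0:ℝ) < 2 ^ n * d := by positivity
      have ha : (mu + lam₀)/2 < lam₀ + 2 ^ n * d := by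
        rw [pow_succ] at hlt; nlinarith
      have hlam1 : (mu + lam₀)/2 < lam := by rw [hl]; linarith
      have hlam2 : lam < lam₀ + 2 ^ n * d := by rw [hl]; linarith
      have hlam0 : lam₀ < lam := by nlinarith
      have hslam := ih lam hlam0 hlam2
      refine qare_step A lam₀ hcontr hlam0 hmu ?_ hslam
      rw [abs_lt]; constructor <;> linarith
  intro lam hlam
  constructor
  · obtain ⟨n, hn⟩ := pow_unbounded_of_one_lt ((lam - lam₀)/d) (by norm_num : (1:ℝ) < 2)
    refine main n lam hlam ?_
    rw [div_lt_iff₀ hdpos] at hn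
    linarith
  · intro u v
    have h := hcontr lam hlam u v
    have hpos : (0:ℝ) < lam - lam₀ := sub_pos.mpr hlam
    rw [← div_eq_inv_mul, le_div_iff₀ hpos, mul_comm]
    exact h
end
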